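/- Let G be the group generated by eight elements s1,t1,s2,t2,S1,T1,S2,T2 subject to the relations (for a fixed positive integer n): [s1,s2]=1, [t1,s2]=1, [t2^{-1},t1^{-1}]=s1, [t2^{-1},s1^{-1}]^n=s2, [s1,t1]=1, [s2,t2]=1, the same six relations with capitalized letters, together with the identifications s1=T2^{-1}, t1=S2^{-1}, s2=T1^{-1}, t2=S1^{-1}. Then G is the trivial group. -/

import Mathlib

open scoped commutatorElement

/-- The relations of the presented group in STATEMENT 1, on generators
s1,t1,s2,t2,S1,T1,S2,T2 (indices 0,...,7). -/
def stmt1Rels (n : ℕ) : Set (FreeGroup (Fin 8)) :=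
  let s1 : FreeGroup (Fin 8) := FreeGroup.of 0
  let t1 : FreeGroup (Fin 8) := FreeGroup.of 1
  let s2 : FreeGroup (Fin 8) := FreeGroup.of 2
  let t2 : FreeGroup (Fin 8) := FreeGroup.of 3
  let S1 : FreeGroup (Fin 8) := FreeGroup.of 4
  let T1 : FreeGroup (Fin 8) := FreeGroup.of 5
  let S2 : FreeGroup (Fin 8) := FreeGroup.of 6
  let T2 : FreeGroup (Fin 8) := FreeGroup.of 7
  {⁅s1, s2⁆, ⁅t1, s2⁆, ⁅t2⁻¹, t1⁻¹⁆ * s1⁻¹, ⁅t2⁻¹, s1⁻¹⁆ ^ n * s2⁻¹,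
    ⁅s1, t1⁆, ⁅s2, t2⁆,
    ⁅S1, S2⁆, ⁅T1, S2⁆, ⁅T2⁻¹, T1⁻¹⁆ * S1⁻¹, ⁅T2⁻¹, S1⁻¹⁆ ^ n * S2⁻¹,
    ⁅S1, T1⁆, ⁅S2, T2⁆,
    s1 * T2, t1 * S2, s2 * T1, t2 * S1}

/-- the presented group is trivial. -/
theorem stmt1 (n : ℕ) (hn : 0 < n) :
    ∀ g : PresentedGroup (stmt1Rels n), g = 1 := by
  classical
  let f : FreeGroup (Fin 8) →* PresentedGroup (stmt1Rels n) :=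
    QuotientGroup.mk' (Subgroup.normalClosure (stmt1Rels n))
  have hrel : ∀ r ∈ stmt1Rels n, f r = 1 := fun r hr =>
    (QuotientGroup.eq_one_iff r).mpr (Subgroup.subset_normalClosure hr)
  set x : Fin 8 → PresentedGroup (stmt1Rels n) := fun i => f (FreeGroup.of i) with hx
  -- extract the needed relations in the quotient
  have E3 : ⁅(x 3)⁻¹, (x 1)⁻¹⁆ * (x 0)⁻¹ = 1 := by
    have h := hrel (⁅(FreeGroup.of 3 : FreeGroup (Fin 8))⁻¹, (FreeGroup.of 1)⁻¹⁆ *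
      (FreeGroup.of 0)⁻¹) (by unfold stmt1Rels; exact Set.mem_insert_of_mem _ (Set.mem_insert_of_mem _ (Set.mem_insert _ _)))
    simpa [map_commutatorElement, hx] using h
  have E4 : ⁅(x 3)⁻¹, (x 0)⁻¹⁆ ^ n * (x 2)⁻¹ = 1 := by
    have h := hrel (⁅(FreeGroup.of 3 : FreeGroup (Fin 8))⁻¹, (FreeGroup.of 0)⁻¹⁆ ^ n *
      (FreeGroup.of 2)⁻¹) (by unfold stmt1Rels; exact Set.mem_insert_of_mem _ (Set.mem_insert_of_mem _ (Set.mem_insert_of_mem _ (Set.mem_insert _ _))))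
    simpa [map_commutatorElement, hx] using h
  have E7 : ⁅x 4, x 6⁆ = 1 := by
    have h := hrel (⁅(FreeGroup.of 4 : FreeGroup (Fin 8)), FreeGroup.of 6⁆) (by unfold stmt1Rels; exact Set.mem_insert_of_mem _ (Set.mem_insert_of_mem _ (Set.mem_insert_of_mem _ (Set.mem_insert_of_mem _ (Set.mem_insert_of_mem _ (Set.mem_insert_of_mem _ (Set.mem_insert _ _)))))))
    simpa [map_commutatorElement, hx] using h
  have E9 : ⁅(x 7)⁻¹, (x 5)⁻¹⁆ * (x 4)⁻¹ = 1 := by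
    have h := hrel (⁅(FreeGroup.of 7 : FreeGroup (Fin 8))⁻¹, (FreeGroup.of 5)⁻¹⁆ *
      (FreeGroup.of 4)⁻¹) (by unfold stmt1Rels; exact Set.mem_insert_of_mem _ (Set.mem_insert_of_mem _ (Set.mem_insert_of_mem _ (Set.mem_insert_of_mem _ (Set.mem_insert_of_mem _ (Set.mem_insert_of_mem _ (Set.mem_insert_of_mem _ (Set.mem_insert_of_mem _ (Set.mem_insert _ _)))))))))
    simpa [map_commutatorElement, hx] using h
  have E10 : ⁅(x 7)⁻¹, (x 4)⁻¹⁆ ^ n * (x 6)⁻¹ = 1 := by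
    have h := hrel (⁅(FreeGroup.of 7 : FreeGroup (Fin 8))⁻¹, (FreeGroup.of 4)⁻¹⁆ ^ n *
      (FreeGroup.of 6)⁻¹) (by unfold stmt1Rels; exact Set.mem_insert_of_mem _ (Set.mem_insert_of_mem _ (Set.mem_insert_of_mem _ (Set.mem_insert_of_mem _ (Set.mem_insert_of_mem _ (Set.mem_insert_of_mem _ (Set.mem_insert_of_mem _ (Set.mem_insert_of_mem _ (Set.mem_insert_of_mem _ (Set.mem_insert _ _))))))))))
    simpa [map_commutatorElement, hx] using h
  have E13 : x 0 * x 7 = 1 := by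
    have h := hrel ((FreeGroup.of 0 : FreeGroup (Fin 8)) * FreeGroup.of 7) (by unfold stmt1Rels; exact Set.mem_insert_of_mem _ (Set.mem_insert_of_mem _ (Set.mem_insert_of_mem _ (Set.mem_insert_of_mem _ (Set.mem_insert_of_mem _ (Set.mem_insert_of_mem _ (Set.mem_insert_of_mem _ (Set.mem_insert_of_mem _ (Set.mem_insert_of_mem _ (Set.mem_insert_of_mem _ (Set.mem_insert_of_mem _ (Set.mem_insert_of_mem _ (Set.mem_insert _ _)))))))))))))
    simpa [hx] using h
  have E14 : x 1 * x 6 = 1 := by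
    have h := hrel ((FreeGroup.of 1 : FreeGroup (Fin 8)) * FreeGroup.of 6) (by unfold stmt1Rels; exact Set.mem_insert_of_mem _ (Set.mem_insert_of_mem _ (Set.mem_insert_of_mem _ (Set.mem_insert_of_mem _ (Set.mem_insert_of_mem _ (Set.mem_insert_of_mem _ (Set.mem_insert_of_mem _ (Set.mem_insert_of_mem _ (Set.mem_insert_of_mem _ (Set.mem_insert_of_mem _ (Set.mem_insert_of_mem _ (Set.mem_insert_of_mem _ (Set.mem_insert_of_mem _ (Set.mem_insert _ _))))))))))))))
    simpa [hx] using h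
  have E15 : x 2 * x 5 = 1 := by
    have h := hrel ((FreeGroup.of 2 : FreeGroup (Fin 8)) * FreeGroup.of 5) (by unfold stmt1Rels; exact Set.mem_insert_of_mem _ (Set.mem_insert_of_mem _ (Set.mem_insert_of_mem _ (Set.mem_insert_of_mem _ (Set.mem_insert_of_mem _ (Set.mem_insert_of_mem _ (Set.mem_insert_of_mem _ (Set.mem_insert_of_mem _ (Set.mem_insert_of_mem _ (Set.mem_insert_of_mem _ (Set.mem_insert_of_mem _ (Set.mem_insert_of_mem _ (Set.mem_insert_of_mem _ (Set.mem_insert_of_mem _ (Set.mem_insert _ _)))))))))))))))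
    simpa [hx] using h
  have E16 : x 3 * x 4 = 1 := by
    have h := hrel ((FreeGroup.of 3 : FreeGroup (Fin 8)) * FreeGroup.of 4) (by unfold stmt1Rels; exact Set.mem_insert_of_mem _ (Set.mem_insert_of_mem _ (Set.mem_insert_of_mem _ (Set.mem_insert_of_mem _ (Set.mem_insert_of_mem _ (Set.mem_insert_of_mem _ (Set.mem_insert_of_mem _ (Set.mem_insert_of_mem _ (Set.mem_insert_of_mem _ (Set.mem_insert_of_mem _ (Set.mem_insert_of_mem _ (Set.mem_insert_of_mem _ (Set.mem_insert_of_mem _ (Set.mem_insert_of_mem _ (Set.mem_insert_of_mem _ (rfl))))))))))))))))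
    simpa [hx] using h
  -- identifications
  have h7 : x 7 = (x 0)⁻¹ := eq_inv_of_mul_eq_one_right E13
  have h6 : x 6 = (x 1)⁻¹ := eq_inv_of_mul_eq_one_right E14
  have h5 : x 5 = (x 2)⁻¹ := eq_inv_of_mul_eq_one_right E15
  have h4 : x 4 = (x 3)⁻¹ := eq_inv_of_mul_eq_one_right E16
  -- derive triviality of generators
  have h0 : x 0 = 1 := by
    have hc : ⁅(x 3)⁻¹, (x 1)⁻¹⁆ = 1 := by rw [h4, h6] at E7; exact E7
    rw [hc, one_mul] at E3
    exact inv_eq_one.mp E3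
  have h2 : x 2 = 1 := by
    rw [h0] at E4
    simpa using E4
  have h3 : x 3 = 1 := by
    rw [h7, h5, h0, h2] at E9
    have h4' : x 4 = 1 := by simpa using E9
    rw [h4'] at h4
    simpa using h4.symm
  have h40 : x 4 = 1 := by rw [h4, h3, inv_one]
  have h1 : x 1 = 1 := by
    rw [h7, h4, h0, h3] at E10
    have h6' : x 6 = 1 := by simpa using E10
    rw [h6'] at h6
    simpa using h6.symm
  have h70 : x 7 = 1 := by rw [h7, h0, inv_one]
  have h60 : x 6 = 1 := by rw [h6, h1, inv_one]
  have h50 : x 5 = 1 := by rw [h5, h2, inv_one]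
  have hall : ∀ i : Fin 8, x i = 1 := by
    intro i
    fin_cases i <;> assumption
  have hf1 : f = 1 := FreeGroup.ext_hom _ _ (fun i => by simpa using hall i)
  intro g
  obtain ⟨w, rfl⟩ := QuotientGroup.mk'_surjective (Subgroup.normalClosure (stmt1Rels n)) g
  show f w = 1
  rw [hf1]; rfl
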